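/- arXiv:2206.11198 — 2 statements merged into one kernel-verified Lean document; each statement's English description precedes it below -/
import Mathlib

section
/- Let T_L := min{ t ≥ 0 : p_t ≤ 1/3 or p_t ≥ 2/3 } be the first time the neutral-bit frequency leaves the open interval (1/3, 2/3). Then for every t ≥ 0, P[T_L ≥ t + 1] ≤ (3/2)·(1 − s)^t. -/
open MeasureTheory ProbabilityTheory Finset
open scoped ENNReal NNReal

/-- The neutral-bit frequency process of the general univariate EDA with sample
size `lam` and update weights `γ 0, γ 1, …, γ lam`.  Conditionally on `F t`, the
samples `x t 1, …, x t lam` are i.i.d. Bernoulli with parameter `p t` (encoded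
via all conditional mixed moments), and
`p (t+1) = γ 0 * p t + ∑ i ∈ [1..lam], γ i * x t i`. -/
structure NeutralBitEDA {Ω : Type*} [MeasurableSpace Ω] (μ : Measure Ω)
    (lam : ℕ) (γ : ℕ → ℝ) where
  F : Filtration ℕ (inferInstance : MeasurableSpace Ω)
  p : ℕ → Ω → ℝ
  x : ℕ → ℕ → Ω → ℝ
  adapted : Adapted F p
  integrable : ∀ t, Integrable (p t) μ
  meas_x : ∀ t i, i ∈ Finset.Icc 1 lam → StronglyMeasurable[F (t + 1)] (x t i)
  p_zero : ∀ᵐ ω ∂μ, p 0 ω = 1 / 2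
  p_range : ∀ t, ∀ᵐ ω ∂μ, p t ω ∈ Set.Icc (0 : ℝ) 1
  x_binary : ∀ t i, i ∈ Finset.Icc 1 lam → ∀ᵐ ω ∂μ, x t i ω = 0 ∨ x t i ω = 1
  cond_iid : ∀ t, ∀ S : Finset ℕ, S ⊆ Finset.Icc 1 lam →
    μ[fun ω => ∏ i ∈ S, x t i ω | F t] =ᵐ[μ] fun ω => p t ω ^ S.card
  update : ∀ t, ∀ᵐ ω ∂μ,
    p (t + 1) ω = γ 0 * p t ω + ∑ i ∈ Finset.Icc 1 lam, γ i * x t i ω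

/-! The diversity `p (1 - p)` of the neutral bit contracts in expectation by exactly `1 - s`
per step: writing `p_{t+1} = p_t + ∑ γ_i (x_i - p_t)`, the centred samples are conditionally
mean-zero and pairwise uncorrelated with variance `p_t (1 - p_t)`, so
`E[p_{t+1}(1 - p_{t+1})] = (1 - s) E[p_t (1 - p_t)]` and hence `E[p_t(1 - p_t)] = (1 - s)^t / 4`.
Before the leaving time `p_t ∈ (1/3, 2/3)`, where `p_t (1 - p_t) > 2/9`, and Markov's inequality
gives `P[T_L ≥ t + 1] ≤ (9/8) (1 - s)^t`. -/

section Orthogonal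

variable {Ω ι : Type*} [MeasurableSpace Ω] {μ : Measure Ω}

theorem integral_sq_sum_of_orthogonal (S : Finset ι) (c : ι → ℝ) {y : ι → Ω → ℝ}
    (hint : ∀ i ∈ S, ∀ j ∈ S, Integrable (fun ω => y i ω * y j ω) μ)
    (horth : ∀ i ∈ S, ∀ j ∈ S, i ≠ j → ∫ ω, y i ω * y j ω ∂μ = 0) :
    ∫ ω, (∑ i ∈ S, c i * y i ω) ^ 2 ∂μ = ∑ i ∈ S, c i ^ 2 * ∫ ω, y i ω ^ 2 ∂μ := by
  have hexpand : ∀ ω, (∑ i ∈ S, c i * y i ω) ^ 2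
      = ∑ i ∈ S, ∑ j ∈ S, c i * c j * (y i ω * y j ω) := fun ω => by
    rw [sq, sum_mul_sum]
    exact sum_congr rfl fun i _ => sum_congr rfl fun j _ => by ring
  simp_rw [hexpand]
  rw [integral_finsetSum _ fun i hi =>
    integrable_finsetSum _ fun j hj => (hint i hi j hj).const_mul _]
  refine sum_congr rfl fun i hi => ?_
  rw [integral_finsetSum _ fun j hj => (hint i hi j hj).const_mul _, sum_eq_single_of_mem i hi]
  · simp only [integral_const_mul, sq]
  · intro j hj hji
    rw [integral_const_mul, horth i hi j hj hji.symm, mul_zero]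

end Orthogonal

namespace NeutralBitEDA

variable {Ω : Type*} [MeasurableSpace Ω] {μ : Measure Ω} {lam : ℕ} {γ : ℕ → ℝ}
  (E : NeutralBitEDA μ lam γ) {t i j : ℕ}

theorem stronglyMeasurable_p (t : ℕ) : StronglyMeasurable[E.F t] (E.p t) :=
  (E.adapted t).stronglyMeasurable

theorem memLp_p (t : ℕ) : MemLp (E.p t) ∞ μ := by
  refine memLp_top_of_bound ((E.stronglyMeasurable_p t).mono (E.F.le t)).aestronglyMeasurable 1 ?_
  filter_upwards [E.p_range t] with ω hω
  rw [Real.norm_eq_abs, abs_le]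
  exact ⟨by linarith [hω.1], hω.2⟩

theorem memLp_x (hi : i ∈ Icc 1 lam) : MemLp (E.x t i) ∞ μ := by
  refine memLp_top_of_bound ((E.meas_x t i hi).mono (E.F.le (t + 1))).aestronglyMeasurable 1 ?_
  filter_upwards [E.x_binary t i hi] with ω hω
  rcases hω with h | h <;> simp [h]

theorem condExp_x (hi : i ∈ Icc 1 lam) : μ[E.x t i | E.F t] =ᵐ[μ] E.p t := by
  simpa using E.cond_iid t {i} (by simpa using hi)

theorem condExp_x_mul_x (hi : i ∈ Icc 1 lam) (hj : j ∈ Icc 1 lam) (hij : i ≠ j) :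
    μ[fun ω => E.x t i ω * E.x t j ω | E.F t] =ᵐ[μ] fun ω => E.p t ω ^ 2 := by
  simpa [prod_pair hij, card_pair hij] using
    E.cond_iid t {i, j} (by simp [insert_subset_iff, hi, hj])

theorem p_succ_ae_eq (hsum : ∑ i ∈ range (lam + 1), γ i = 1) (t : ℕ) :
    ∀ᵐ ω ∂μ, E.p (t + 1) ω = E.p t ω + ∑ i ∈ Icc 1 lam, γ i * (E.x t i ω - E.p t ω) := by
  have hγ : γ 0 = 1 - ∑ i ∈ Icc 1 lam, γ i := by
    have hrange : range (lam + 1) = insert 0 (Icc 1 lam) := by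
      ext a
      simp only [mem_range, mem_insert, mem_Icc]
      omega
    rw [hrange, sum_insert (by simp)] at hsum
    linarith
  filter_upwards [E.update t] with ω h
  simp only [h, hγ, mul_sub, sum_sub_distrib, ← sum_mul]
  ring

theorem memLp_noise (hi : i ∈ Icc 1 lam) : MemLp (fun ω => E.x t i ω - E.p t ω) ∞ μ :=
  (E.memLp_x hi).sub (E.memLp_p t)

theorem ae_nonneg_p_mul_one_sub_p (t : ℕ) : 0 ≤ᵐ[μ] fun ω => E.p t ω * (1 - E.p t ω) := by
  filter_upwards [E.p_range t] with ω h
  exact mul_nonneg h.1 (sub_nonneg.2 h.2)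

section

variable [IsFiniteMeasure μ]

theorem memLp_one_sub_two_mul_p (t : ℕ) : MemLp (fun ω => 1 - 2 * E.p t ω) ∞ μ :=
  (memLp_const 1).sub ((E.memLp_p t).const_mul 2)

theorem integrable_p_mul_one_sub_p (t : ℕ) : Integrable (fun ω => E.p t ω * (1 - E.p t ω)) μ :=
  (((memLp_const 1).sub (E.memLp_p t)).mul' (E.memLp_p t)).integrable le_top

theorem integral_mul_noise {g : Ω → ℝ} (hg : StronglyMeasurable[E.F t] g) (hgLp : MemLp g ∞ μ)
    (hi : i ∈ Icc 1 lam) : ∫ ω, g ω * (E.x t i ω - E.p t ω) ∂μ = 0 := by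
  have hnoise : MemLp (E.x t i - E.p t) ∞ μ := (E.memLp_x hi).sub (E.memLp_p t)
  have hcond : μ[E.x t i - E.p t | E.F t] =ᵐ[μ] 0 := by
    filter_upwards [condExp_sub ((E.memLp_x hi).integrable le_top)
      ((E.memLp_p t).integrable le_top) (E.F t), E.condExp_x hi] with ω hsub hx
    rw [hsub, Pi.sub_apply, hx, condExp_of_stronglyMeasurable (E.F.le t) (E.stronglyMeasurable_p t)
      ((E.memLp_p t).integrable le_top), sub_self, Pi.zero_apply]
  calc ∫ ω, g ω * (E.x t i ω - E.p t ω) ∂μ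
      = ∫ ω, μ[g * (E.x t i - E.p t) | E.F t] ω ∂μ := (integral_condExp (E.F.le t)).symm
    _ = ∫ ω, (g * μ[E.x t i - E.p t | E.F t]) ω ∂μ :=
        integral_congr_ae (condExp_mul_of_stronglyMeasurable_left hg
          ((hnoise.mul hgLp).integrable le_top) (hnoise.integrable le_top))
    _ = 0 := (integral_congr_ae hcond.mul_left).trans (by simp)

theorem integral_one_sub_two_mul_p_mul_noise (hi : i ∈ Icc 1 lam) :
    ∫ ω, (1 - 2 * E.p t ω) * (E.x t i ω - E.p t ω) ∂μ = 0 :=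
  E.integral_mul_noise (stronglyMeasurable_const.sub ((E.stronglyMeasurable_p t).const_mul 2))
    (E.memLp_one_sub_two_mul_p t) hi

theorem integral_noise_mul_noise (hi : i ∈ Icc 1 lam) (hj : j ∈ Icc 1 lam) (hij : i ≠ j) :
    ∫ ω, (E.x t i ω - E.p t ω) * (E.x t j ω - E.p t ω) ∂μ = 0 := by
  have hp := E.memLp_p t
  have hxx : Integrable (fun ω => E.x t i ω * E.x t j ω) μ :=
    ((E.memLp_x hj).mul' (E.memLp_x hi)).integrable le_top
  have hpp : Integrable (fun ω => E.p t ω ^ 2) μ := (hp.mono_exponent le_top).integrable_sq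
  have hpi : Integrable (fun ω => E.p t ω * (E.x t i ω - E.p t ω)) μ :=
    ((E.memLp_noise hi).mul' hp).integrable le_top
  have hpj : Integrable (fun ω => E.p t ω * (E.x t j ω - E.p t ω)) μ :=
    ((E.memLp_noise hj).mul' hp).integrable le_top
  have hexpand : ∀ ω, (E.x t i ω - E.p t ω) * (E.x t j ω - E.p t ω)
      = E.x t i ω * E.x t j ω - E.p t ω ^ 2 - E.p t ω * (E.x t i ω - E.p t ω)
        - E.p t ω * (E.x t j ω - E.p t ω) := fun ω => by ring
  simp_rw [hexpand]
  rw [integral_sub ((hxx.sub' hpp).sub' hpi) hpj, integral_sub (hxx.sub' hpp) hpi,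
    integral_sub hxx hpp,
    (integral_condExp (E.F.le t)).symm.trans (integral_congr_ae (E.condExp_x_mul_x hi hj hij)),
    E.integral_mul_noise (E.stronglyMeasurable_p t) hp hi,
    E.integral_mul_noise (E.stronglyMeasurable_p t) hp hj, sub_self, sub_zero, sub_zero]

theorem integral_noise_sq (hi : i ∈ Icc 1 lam) :
    ∫ ω, (E.x t i ω - E.p t ω) ^ 2 ∂μ = ∫ ω, E.p t ω * (1 - E.p t ω) ∂μ := by
  have hsplit : ∀ᵐ ω ∂μ, (E.x t i ω - E.p t ω) ^ 2
      = E.p t ω * (1 - E.p t ω) + (1 - 2 * E.p t ω) * (E.x t i ω - E.p t ω) := by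
    filter_upwards [E.x_binary t i hi] with ω hx
    rcases hx with hx | hx <;> rw [hx] <;> ring
  rw [integral_congr_ae hsplit, integral_add (E.integrable_p_mul_one_sub_p t)
    (((E.memLp_noise hi).mul' (E.memLp_one_sub_two_mul_p t)).integrable le_top),
    E.integral_one_sub_two_mul_p_mul_noise hi, add_zero]

theorem integral_p_mul_one_sub_p_succ (hsum : ∑ i ∈ range (lam + 1), γ i = 1) (t : ℕ) :
    ∫ ω, E.p (t + 1) ω * (1 - E.p (t + 1) ω) ∂μ
      = (1 - ∑ i ∈ Icc 1 lam, γ i ^ 2) * ∫ ω, E.p t ω * (1 - E.p t ω) ∂μ := by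
  set N : Ω → ℝ := fun ω => ∑ i ∈ Icc 1 lam, γ i * (E.x t i ω - E.p t ω) with hN
  have hNLp : MemLp N ∞ μ := memLp_finsetSum _ fun i hi => (E.memLp_noise hi).const_mul _
  have hdriftLp : MemLp (fun ω => (1 - 2 * E.p t ω) * N ω) ∞ μ :=
    hNLp.mul' (E.memLp_one_sub_two_mul_p t)
  have hdrift : ∫ ω, (1 - 2 * E.p t ω) * N ω ∂μ = 0 := by
    have hexpand : ∀ ω, (1 - 2 * E.p t ω) * N ω
        = ∑ i ∈ Icc 1 lam, γ i * ((1 - 2 * E.p t ω) * (E.x t i ω - E.p t ω)) := fun ω => by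
      rw [hN, mul_sum]
      exact sum_congr rfl fun i _ => by ring
    simp_rw [hexpand]
    rw [integral_finsetSum _ fun i hi => (((E.memLp_noise hi).mul'
      (E.memLp_one_sub_two_mul_p t)).integrable le_top).const_mul _]
    exact sum_eq_zero fun i hi => by
      rw [integral_const_mul, E.integral_one_sub_two_mul_p_mul_noise hi, mul_zero]
  have hvar : ∫ ω, N ω ^ 2 ∂μ
      = (∑ i ∈ Icc 1 lam, γ i ^ 2) * ∫ ω, E.p t ω * (1 - E.p t ω) ∂μ := by
    rw [integral_sq_sum_of_orthogonal _ _
      (fun i hi j hj => ((E.memLp_noise hj).mul' (E.memLp_noise hi)).integrable le_top)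
      (fun i hi j hj hij => E.integral_noise_mul_noise hi hj hij), sum_mul]
    exact sum_congr rfl fun i hi => by rw [E.integral_noise_sq hi]
  have hsplit : ∀ᵐ ω ∂μ, E.p (t + 1) ω * (1 - E.p (t + 1) ω)
      = E.p t ω * (1 - E.p t ω) + (1 - 2 * E.p t ω) * N ω - N ω ^ 2 := by
    filter_upwards [E.p_succ_ae_eq hsum t] with ω h
    rw [h]
    ring
  have hpq := E.integrable_p_mul_one_sub_p t
  rw [integral_congr_ae hsplit, integral_sub (hpq.fun_add (hdriftLp.integrable le_top))
    (hNLp.mono_exponent le_top).integrable_sq, integral_add hpq (hdriftLp.integrable le_top),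
    hdrift, hvar]
  ring

end

variable [IsProbabilityMeasure μ]

theorem integral_p_mul_one_sub_p (hsum : ∑ i ∈ range (lam + 1), γ i = 1) (t : ℕ) :
    ∫ ω, E.p t ω * (1 - E.p t ω) ∂μ = (1 - ∑ i ∈ Icc 1 lam, γ i ^ 2) ^ t / 4 := by
  induction t with
  | zero =>
    rw [integral_congr_ae (g := fun _ => 1 / 4) (by
      filter_upwards [E.p_zero] with ω h
      rw [h]
      norm_num)]
    simp
  | succ t ih =>
    rw [E.integral_p_mul_one_sub_p_succ hsum, ih, pow_succ]
    ring

/-- Not automatic for real weights: it is forced by `p₁ (1 - p₁) ≥ 0`. -/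
theorem sum_sq_le_one (E : NeutralBitEDA μ lam γ) (hsum : ∑ i ∈ range (lam + 1), γ i = 1) :
    ∑ i ∈ Icc 1 lam, γ i ^ 2 ≤ 1 := by
  have h := integral_nonneg_of_ae (E.ae_nonneg_p_mul_one_sub_p 1)
  rw [E.integral_p_mul_one_sub_p hsum 1, pow_one] at h
  linarith

end NeutralBitEDA

theorem neutral_bit_leaving_time_tail_general {Ω : Type*} [MeasurableSpace Ω]
    (μ : Measure Ω) [IsProbabilityMeasure μ]
    (lam : ℕ) (γ : ℕ → ℝ)
    (hsum : ∑ i ∈ Finset.range (lam + 1), γ i = 1)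
    (E : NeutralBitEDA μ lam γ)
    (TL : Ω → ℝ≥0∞)
    (hTL : ∀ ω, TL ω =
      ⨅ (u : ℕ) (_ : E.p u ω ≤ 1 / 3 ∨ 2 / 3 ≤ E.p u ω), (u : ℝ≥0∞))
    (t : ℕ) :
    μ {ω | (t : ℝ≥0∞) + 1 ≤ TL ω}
      ≤ ENNReal.ofReal ((3 / 2) * (1 - ∑ i ∈ Finset.Icc 1 lam, γ i ^ 2) ^ t) := by
  have hinside : {ω | (t : ℝ≥0∞) + 1 ≤ TL ω} ⊆ {ω | 2 / 9 ≤ E.p t ω * (1 - E.p t ω)} := by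
    intro ω hω
    have hstay : ¬ (E.p t ω ≤ 1 / 3 ∨ 2 / 3 ≤ E.p t ω) := fun hleave =>
      (ENNReal.lt_add_right (ENNReal.natCast_ne_top t) one_ne_zero).not_ge
        (hω.trans ((hTL ω).trans_le (iInf₂_le t hleave)))
    push Not at hstay
    show 2 / 9 ≤ E.p t ω * (1 - E.p t ω)
    nlinarith [hstay.1, hstay.2]
  have hmarkov := mul_meas_ge_le_integral_of_nonneg (E.ae_nonneg_p_mul_one_sub_p t)
    (E.integrable_p_mul_one_sub_p t) (2 / 9)
  rw [E.integral_p_mul_one_sub_p hsum t] at hmarkov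
  have hpow := pow_nonneg (sub_nonneg.2 (E.sum_sq_le_one hsum)) t
  calc μ {ω | (t : ℝ≥0∞) + 1 ≤ TL ω}
      ≤ μ {ω | 2 / 9 ≤ E.p t ω * (1 - E.p t ω)} := measure_mono hinside
    _ = ENNReal.ofReal (μ.real {ω | 2 / 9 ≤ E.p t ω * (1 - E.p t ω)}) :=
        (ENNReal.ofReal_toReal (measure_ne_top _ _)).symm
    _ ≤ ENNReal.ofReal ((3 / 2) * (1 - ∑ i ∈ Finset.Icc 1 lam, γ i ^ 2) ^ t) :=
        ENNReal.ofReal_le_ofReal (by nlinarith)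

/-- Let `T_L` be the first time the neutral-bit frequency leaves the open
interval `(1/3, 2/3)` (with value `⊤` if it never does).  Then for every
`t ≥ 0`, `P[T_L ≥ t + 1] ≤ (3/2) * (1 - s) ^ t`, where `s = ∑_{i=1}^lam γ i ^ 2`. -/
theorem neutral_bit_leaving_time_tail {Ω : Type*} [MeasurableSpace Ω]
    (μ : Measure Ω) [IsProbabilityMeasure μ]
    (lam : ℕ) (hlam : 1 ≤ lam) (γ : ℕ → ℝ)
    (hsum : ∑ i ∈ Finset.range (lam + 1), γ i = 1)
    (hnz : ∃ i ∈ Finset.Icc 1 lam, γ i ≠ 0)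
    (E : NeutralBitEDA μ lam γ)
    (TL : Ω → ℝ≥0∞)
    (hTL : ∀ ω, TL ω =
      ⨅ (u : ℕ) (_ : E.p u ω ≤ 1 / 3 ∨ 2 / 3 ≤ E.p u ω), (u : ℝ≥0∞))
    (t : ℕ) :
    μ {ω | (t : ℝ≥0∞) + 1 ≤ TL ω}
      ≤ ENNReal.ofReal ((3 / 2) * (1 - ∑ i ∈ Finset.Icc 1 lam, γ i ^ 2) ^ t) :=
  neutral_bit_leaving_time_tail_general μ lam γ hsum E TL hTL t
end

section
/- Let n ≥ 2 be an integer and let (p_1(t))_{t≥0}, …, (p_n(t))_{t≥0} be n mutually independent copies of the neutral-bit frequency process. Set T_0 := 1 / (144 · s · ln n). Then P[ for every i ∈ {1,…,n} and every integer t with 0 ≤ t ≤ T_0, p_i(t) ∈ [1/3, 2/3] ] ≥ 1 − 2/n. -/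
/-!
The process `exp (c * (p t - 1/2))` is a submartingale (`p` is a martingale and `exp` is convex),
and Hoeffding's lemma applied to each Bernoulli sample shows that its expectation grows at most by
the factor `exp (c² s / 8)` per step. Doob's maximal inequality with `c = ± 2 / (3 s T)` bounds the
probability that one frequency leaves `[1/3, 2/3]` within `T ≤ T₀` steps by
`2 exp (-1 / (18 s T)) ≤ 2 / n²`, and a union bound over the `n` frequencies gives `2 / n`.
-/

open MeasureTheory ProbabilityTheory Finset
open scoped ENNReal NNReal

lemma exp_mul_le_one_add_exp_sub_one_mul {q : ℝ} (hq : q ∈ Set.Icc (0 : ℝ) 1) (u : ℝ) :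
    Real.exp (q * u) ≤ 1 + (Real.exp u - 1) * q := by
  have h := convexOn_exp.2 (Set.mem_univ 0) (Set.mem_univ u) (sub_nonneg.2 hq.2) hq.1
    (sub_add_cancel 1 q)
  simp only [smul_eq_mul, mul_zero, zero_add, Real.exp_zero] at h
  linarith

lemma one_add_exp_sub_one_mul_le {q : ℝ} (hq : q ∈ Set.Icc (0 : ℝ) 1) (u : ℝ) :
    1 + (Real.exp u - 1) * q ≤ Real.exp (q * u + u ^ 2 / 8) := by
  set ν : Measure ℝ := bernoulliMeasure 1 0 ⟨q, hq⟩
  have hsupp : ∀ᵐ z ∂ν, z ∈ Set.Icc (0 : ℝ) 1 := by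
    rw [ae_iff]
    exact bernoulliMeasure_apply_of_notMem_of_notMem _ measurableSet_Icc.compl
      (by simp) (by simp)
  have hoeffding := (hasSubgaussianMGF_of_mem_Icc measurable_id.aemeasurable hsupp).mgf_le u
  simp only [mgf, ν, integral_bernoulliMeasure, id, smul_eq_mul] at hoeffding
  calc 1 + (Real.exp u - 1) * q
      = (q * Real.exp (u * (1 - (q * 1 + (1 - q) * 0)))
          + (1 - q) * Real.exp (u * (0 - (q * 1 + (1 - q) * 0)))) * Real.exp (q * u) := by
        rw [add_mul, mul_assoc, mul_assoc, ← Real.exp_add, ← Real.exp_add]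
        ring_nf
        rw [Real.exp_zero]
        ring
    _ ≤ Real.exp (((‖(1 : ℝ) - 0‖₊ / 2) ^ 2 : ℝ≥0) * u ^ 2 / 2) * Real.exp (q * u) := by
        gcongr
    _ = Real.exp (q * u + u ^ 2 / 8) := by
        rw [← Real.exp_add]
        norm_num
        ring_nf

section Products

variable {ι : Type*} {q : ℝ}

lemma exp_mul_sum_le_prod_one_add_exp_sub_one_mul (hq : q ∈ Set.Icc (0 : ℝ) 1)
    (s : Finset ι) (u : ι → ℝ) :
    Real.exp (q * ∑ i ∈ s, u i) ≤ ∏ i ∈ s, (1 + (Real.exp (u i) - 1) * q) := by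
  rw [mul_sum, Real.exp_sum]
  exact prod_le_prod (fun _ _ => (Real.exp_pos _).le)
    fun i _ => exp_mul_le_one_add_exp_sub_one_mul hq (u i)

lemma prod_one_add_exp_sub_one_mul_le_exp (hq : q ∈ Set.Icc (0 : ℝ) 1)
    (s : Finset ι) (u : ι → ℝ) :
    ∏ i ∈ s, (1 + (Real.exp (u i) - 1) * q)
      ≤ Real.exp (q * ∑ i ∈ s, u i + (∑ i ∈ s, u i ^ 2) / 8) := by
  calc ∏ i ∈ s, (1 + (Real.exp (u i) - 1) * q)
      ≤ ∏ i ∈ s, Real.exp (q * u i + u i ^ 2 / 8) :=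
        prod_le_prod (fun i _ => (Real.exp_pos _).le.trans
            (exp_mul_le_one_add_exp_sub_one_mul hq (u i)))
          fun i _ => one_add_exp_sub_one_mul_le hq (u i)
    _ = Real.exp (q * ∑ i ∈ s, u i + (∑ i ∈ s, u i ^ 2) / 8) := by
        rw [← Real.exp_sum, sum_add_distrib, mul_sum, sum_div]

end Products

section ConditionalMoments

variable {ι Ω : Type*} {m m₀ : MeasurableSpace Ω} {μ : Measure Ω} {s : Finset ι}
  {x : ι → Ω → ℝ}

lemma prod_one_add_mul_eq_sum_powerset (a v : ι → ℝ) (s : Finset ι) :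
    ∏ i ∈ s, (1 + a i * v i) = ∑ S ∈ s.powerset, (∏ i ∈ S, a i) * ∏ i ∈ S, v i := by
  simp only [prod_one_add, prod_mul_distrib]

lemma integrable_prod_one_add_mul (a : ι → ℝ)
    (hint : ∀ S ⊆ s, Integrable (fun ω => ∏ i ∈ S, x i ω) μ) :
    Integrable (fun ω => ∏ i ∈ s, (1 + a i * x i ω)) μ := by
  simp only [prod_one_add_mul_eq_sum_powerset]
  exact integrable_finsetSum _ fun S hS => (hint S (mem_powerset.1 hS)).const_mul _

lemma condExp_prod_one_add_mul (a : ι → ℝ) {q : Ω → ℝ}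
    (hint : ∀ S ⊆ s, Integrable (fun ω => ∏ i ∈ S, x i ω) μ)
    (hmom : ∀ S ⊆ s, μ[fun ω => ∏ i ∈ S, x i ω | m] =ᵐ[μ] fun ω => q ω ^ S.card) :
    μ[fun ω => ∏ i ∈ s, (1 + a i * x i ω) | m] =ᵐ[μ] fun ω => ∏ i ∈ s, (1 + a i * q ω) := by
  have hexpand : (fun ω => ∏ i ∈ s, (1 + a i * x i ω))
      = ∑ S ∈ s.powerset, (∏ i ∈ S, a i) • fun ω => ∏ i ∈ S, x i ω := by
    ext ω
    simp [prod_one_add_mul_eq_sum_powerset]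
  have hterm : ∀ S ∈ s.powerset, μ[(∏ i ∈ S, a i) • fun ω => ∏ i ∈ S, x i ω | m]
      =ᵐ[μ] (∏ i ∈ S, a i) • fun ω => q ω ^ S.card := fun S hS =>
    (condExp_smul _ _ m).trans ((hmom S (mem_powerset.1 hS)).const_smul _)
  rw [hexpand]
  refine (condExp_finsetSum (fun S hS => (hint S (mem_powerset.1 hS)).smul _) m).trans
    ((eventuallyEq_sum hterm).trans (Filter.EventuallyEq.of_eq ?_))
  ext ω
  simp [prod_one_add_mul_eq_sum_powerset, prod_const]

end ConditionalMoments

lemma sum_Icc_one_eq_one_sub_of_sum_range_eq_one {lam : ℕ} {γ : ℕ → ℝ}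
    (hsum : ∑ i ∈ range (lam + 1), γ i = 1) : ∑ i ∈ Icc 1 lam, γ i = 1 - γ 0 := by
  rw [sum_range_eq_add_Ico _ (by omega), Ico_add_one_right_eq_Icc] at hsum
  linarith

namespace NeutralBitEDA

variable {Ω : Type*} [MeasurableSpace Ω] {μ : Measure Ω} {lam : ℕ} {γ : ℕ → ℝ}
  (E : NeutralBitEDA μ lam γ)

noncomputable def expDeviation (c : ℝ) (t : ℕ) (ω : Ω) : ℝ :=
  Real.exp (c * (E.p t ω - 1 / 2))

lemma stronglyMeasurable_expDeviation (c : ℝ) (t : ℕ) :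
    StronglyMeasurable[E.F t] (E.expDeviation c t) :=
  Real.continuous_exp.comp_stronglyMeasurable
    (((E.adapted t).stronglyMeasurable.sub stronglyMeasurable_const).const_mul c)

lemma integrable_expDeviation [IsFiniteMeasure μ] (c : ℝ) (t : ℕ) :
    Integrable (E.expDeviation c t) μ := by
  refine .of_bound ((E.stronglyMeasurable_expDeviation c t).mono (E.F.le t)).aestronglyMeasurable
    (Real.exp |c|) ?_
  filter_upwards [E.p_range t] with ω hp
  rw [Real.norm_eq_abs, expDeviation, Real.abs_exp, Real.exp_le_exp]
  cases abs_cases c <;> nlinarith [hp.1, hp.2]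

lemma ae_x_eq_zero_or_one (t : ℕ) :
    ∀ᵐ ω ∂μ, ∀ i ∈ Icc 1 lam, E.x t i ω = 0 ∨ E.x t i ω = 1 :=
  (Filter.eventually_all_finset _).2 (E.x_binary t)

lemma integrable_prod_x [IsFiniteMeasure μ] (t : ℕ) {S : Finset ℕ} (hS : S ⊆ Icc 1 lam) :
    Integrable (fun ω => ∏ i ∈ S, E.x t i ω) μ := by
  refine .of_bound (((stronglyMeasurable_fun_prod S fun i hi =>
    E.meas_x t i (hS hi)).mono (E.F.le (t + 1))).aestronglyMeasurable) 1 ?_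
  filter_upwards [E.ae_x_eq_zero_or_one t] with ω hx
  rw [Real.norm_eq_abs, abs_prod]
  refine prod_le_one (fun i _ => abs_nonneg _) fun i hi => ?_
  rcases hx i (hS hi) with h | h <;> simp [h]

lemma expDeviation_succ_ae_eq (c : ℝ) (t : ℕ) :
    E.expDeviation c (t + 1) =ᵐ[μ] fun ω => Real.exp (c * (γ 0 * E.p t ω - 1 / 2)) *
      ∏ i ∈ Icc 1 lam, (1 + (Real.exp (c * γ i) - 1) * E.x t i ω) := by
  filter_upwards [E.update t, E.ae_x_eq_zero_or_one t] with ω hp hx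
  have hbinary : ∀ i ∈ Icc 1 lam,
      Real.exp (c * γ i * E.x t i ω) = 1 + (Real.exp (c * γ i) - 1) * E.x t i ω := by
    intro i hi
    rcases hx i hi with h | h <;> simp [h]
  rw [expDeviation, hp, ← prod_congr rfl hbinary, ← Real.exp_sum, ← Real.exp_add]
  congr 1
  simp only [mul_assoc, ← mul_sum]
  ring

lemma condExp_expDeviation_succ [IsFiniteMeasure μ] (c : ℝ) (t : ℕ) :
    μ[E.expDeviation c (t + 1) | E.F t] =ᵐ[μ] fun ω => Real.exp (c * (γ 0 * E.p t ω - 1 / 2)) *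
      ∏ i ∈ Icc 1 lam, (1 + (Real.exp (c * γ i) - 1) * E.p t ω) := by
  have hfactor : StronglyMeasurable[E.F t] fun ω => Real.exp (c * (γ 0 * E.p t ω - 1 / 2)) :=
    Real.continuous_exp.comp_stronglyMeasurable
      ((((E.adapted t).stronglyMeasurable.const_mul _).sub stronglyMeasurable_const).const_mul c)
  refine (condExp_congr_ae (E.expDeviation_succ_ae_eq c t)).trans ?_
  refine (condExp_mul_of_stronglyMeasurable_left hfactor
    ((E.integrable_expDeviation c (t + 1)).congr (E.expDeviation_succ_ae_eq c t))
    (integrable_prod_one_add_mul _ fun S hS => E.integrable_prod_x t hS)).trans ?_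
  filter_upwards [condExp_prod_one_add_mul (m := E.F t) (fun i => Real.exp (c * γ i) - 1)
    (fun S hS => E.integrable_prod_x t hS) (E.cond_iid t)] with ω hω
  simp only [Pi.mul_apply, hω]

lemma expDeviation_le_condExp [IsFiniteMeasure μ] (hsum : ∑ i ∈ range (lam + 1), γ i = 1)
    (c : ℝ) (t : ℕ) :
    E.expDeviation c t ≤ᵐ[μ] μ[E.expDeviation c (t + 1) | E.F t] := by
  filter_upwards [E.condExp_expDeviation_succ c t, E.p_range t] with ω hω hp
  have hprod := exp_mul_sum_le_prod_one_add_exp_sub_one_mul hp (Icc 1 lam) (fun i => c * γ i)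
  rw [← mul_sum, sum_Icc_one_eq_one_sub_of_sum_range_eq_one hsum] at hprod
  calc E.expDeviation c t ω
      = Real.exp (c * (γ 0 * E.p t ω - 1 / 2)) * Real.exp (E.p t ω * (c * (1 - γ 0))) := by
        rw [expDeviation, ← Real.exp_add]
        ring_nf
    _ ≤ _ := by
        rw [hω]
        gcongr

lemma condExp_expDeviation_succ_le [IsFiniteMeasure μ]
    (hsum : ∑ i ∈ range (lam + 1), γ i = 1) (c : ℝ) (t : ℕ) :
    μ[E.expDeviation c (t + 1) | E.F t] ≤ᵐ[μ]
      fun ω => Real.exp (c ^ 2 * (∑ i ∈ Icc 1 lam, γ i ^ 2) / 8) * E.expDeviation c t ω := by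
  filter_upwards [E.condExp_expDeviation_succ c t, E.p_range t] with ω hω hp
  have hprod := prod_one_add_exp_sub_one_mul_le_exp hp (Icc 1 lam) (fun i => c * γ i)
  simp only [← mul_sum, mul_pow, sum_Icc_one_eq_one_sub_of_sum_range_eq_one hsum] at hprod
  calc μ[E.expDeviation c (t + 1) | E.F t] ω
      ≤ Real.exp (c * (γ 0 * E.p t ω - 1 / 2))
          * Real.exp (E.p t ω * (c * (1 - γ 0)) + c ^ 2 * (∑ i ∈ Icc 1 lam, γ i ^ 2) / 8) := by
        rw [hω]
        gcongr
    _ = _ := by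
        rw [expDeviation, ← Real.exp_add, ← Real.exp_add]
        ring_nf

lemma submartingale_expDeviation [IsFiniteMeasure μ] (hsum : ∑ i ∈ range (lam + 1), γ i = 1)
    (c : ℝ) : Submartingale (E.expDeviation c) E.F μ :=
  submartingale_nat (E.stronglyMeasurable_expDeviation c) (E.integrable_expDeviation c)
    (E.expDeviation_le_condExp hsum c)

lemma integral_expDeviation_le [IsProbabilityMeasure μ]
    (hsum : ∑ i ∈ range (lam + 1), γ i = 1) (c : ℝ) (t : ℕ) :
    ∫ ω, E.expDeviation c t ω ∂μ ≤ Real.exp (c ^ 2 * (∑ i ∈ Icc 1 lam, γ i ^ 2) * t / 8) := by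
  induction t with
  | zero =>
    have hone : E.expDeviation c 0 =ᵐ[μ] fun _ => 1 := by
      filter_upwards [E.p_zero] with ω hω
      simp [expDeviation, hω]
    simp [integral_congr_ae hone]
  | succ t ih =>
    calc ∫ ω, E.expDeviation c (t + 1) ω ∂μ
        = ∫ ω, μ[E.expDeviation c (t + 1) | E.F t] ω ∂μ := (integral_condExp (E.F.le t)).symm
      _ ≤ ∫ ω, Real.exp (c ^ 2 * (∑ i ∈ Icc 1 lam, γ i ^ 2) / 8) * E.expDeviation c t ω ∂μ :=
          integral_mono_ae integrable_condExp ((E.integrable_expDeviation c t).const_mul _)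
            (E.condExp_expDeviation_succ_le hsum c t)
      _ ≤ Real.exp (c ^ 2 * (∑ i ∈ Icc 1 lam, γ i ^ 2) / 8)
            * Real.exp (c ^ 2 * (∑ i ∈ Icc 1 lam, γ i ^ 2) * t / 8) := by
          rw [integral_const_mul]
          gcongr
      _ = Real.exp (c ^ 2 * (∑ i ∈ Icc 1 lam, γ i ^ 2) * ↑(t + 1) / 8) := by
          rw [← Real.exp_add]
          push_cast
          ring_nf

lemma measure_p_zero_notMem_Icc [IsProbabilityMeasure μ] :
    μ {ω | E.p 0 ω ∉ Set.Icc (1 / 3 : ℝ) (2 / 3)} = 0 := by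
  refine ae_iff.1 ?_
  filter_upwards [E.p_zero] with ω hω
  norm_num [hω]

lemma measure_exists_mul_deviation_ge_le [IsProbabilityMeasure μ]
    (hsum : ∑ i ∈ range (lam + 1), γ i = 1) (c a : ℝ) (T : ℕ) :
    μ {ω | ∃ k ≤ T, a ≤ c * (E.p k ω - 1 / 2)}
      ≤ ENNReal.ofReal (Real.exp (c ^ 2 * (∑ i ∈ Icc 1 lam, γ i ^ 2) * T / 8 - a)) := by
  set A := {ω | Real.exp a ≤ (range (T + 1)).sup' nonempty_range_add_one
    fun k => E.expDeviation c k ω}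
  have hsub : {ω | ∃ k ≤ T, a ≤ c * (E.p k ω - 1 / 2)} ⊆ A := by
    rintro ω ⟨k, hk, hak⟩
    exact (Real.exp_le_exp.2 hak).trans (le_sup' (fun k => E.expDeviation c k ω)
      (mem_range.2 (Nat.lt_succ_of_le hk)))
  have hdoob := maximal_ineq (E.submartingale_expDeviation hsum c)
    (fun t ω => (Real.exp_pos _).le) (ε := (Real.exp a).toNNReal) T
  rw [Real.coe_toNNReal _ (Real.exp_pos a).le] at hdoob
  have hbound : ENNReal.ofReal (Real.exp a) * μ A
      ≤ ENNReal.ofReal (Real.exp (c ^ 2 * (∑ i ∈ Icc 1 lam, γ i ^ 2) * T / 8)) :=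
    calc ENNReal.ofReal (Real.exp a) * μ A
        ≤ ENNReal.ofReal (∫ ω in A, E.expDeviation c T ω ∂μ) := hdoob
      _ ≤ ENNReal.ofReal (∫ ω, E.expDeviation c T ω ∂μ) :=
          ENNReal.ofReal_le_ofReal (setIntegral_le_integral (E.integrable_expDeviation c T)
            (.of_forall fun ω => (Real.exp_pos _).le))
      _ ≤ _ := ENNReal.ofReal_le_ofReal (E.integral_expDeviation_le hsum c T)
  rw [Real.exp_sub, ENNReal.ofReal_div_of_pos (Real.exp_pos a)]
  refine (measure_mono hsub).trans ((ENNReal.le_div_iff_mul_le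
    (.inl (ENNReal.ofReal_pos.2 (Real.exp_pos a)).ne') (.inl ENNReal.ofReal_ne_top)).2 ?_)
  rwa [mul_comm]

lemma measure_exists_le_notMem_Icc_le [IsProbabilityMeasure μ]
    (hsum : ∑ i ∈ range (lam + 1), γ i = 1) (hs : 0 < ∑ i ∈ Icc 1 lam, γ i ^ 2)
    {T : ℕ} (hT : 0 < T) :
    μ {ω | ∃ k ≤ T, E.p k ω ∉ Set.Icc (1 / 3 : ℝ) (2 / 3)}
      ≤ ENNReal.ofReal (2 * Real.exp (-1 / (18 * (∑ i ∈ Icc 1 lam, γ i ^ 2) * T))) := by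
  set s := ∑ i ∈ Icc 1 lam, γ i ^ 2
  have hsT : 0 < s * T := mul_pos hs (Nat.cast_pos.2 hT)
  -- `c` minimises `c ^ 2 * s * T / 8 - c / 6`
  set c := 2 / (3 * (s * T))
  have hc : 0 < c := by positivity
  have hexponent : c ^ 2 * s * T / 8 - c / 6 = -1 / (18 * s * T) := by
    simp only [c]
    field_simp
    ring
  have hcover : {ω | ∃ k ≤ T, E.p k ω ∉ Set.Icc (1 / 3 : ℝ) (2 / 3)}
      ⊆ {ω | ∃ k ≤ T, c / 6 ≤ c * (E.p k ω - 1 / 2)}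
        ∪ {ω | ∃ k ≤ T, c / 6 ≤ -c * (E.p k ω - 1 / 2)} := by
    rintro ω ⟨k, hk, hout⟩
    rw [Set.mem_Icc, not_and_or, not_le, not_le] at hout
    rcases hout with hlow | hhigh
    · exact .inr ⟨k, hk, by nlinarith⟩
    · exact .inl ⟨k, hk, by nlinarith⟩
  calc μ {ω | ∃ k ≤ T, E.p k ω ∉ Set.Icc (1 / 3 : ℝ) (2 / 3)}
      ≤ μ {ω | ∃ k ≤ T, c / 6 ≤ c * (E.p k ω - 1 / 2)}
        + μ {ω | ∃ k ≤ T, c / 6 ≤ -c * (E.p k ω - 1 / 2)} :=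
        (measure_mono hcover).trans (measure_union_le _ _)
    _ ≤ ENNReal.ofReal (Real.exp (-1 / (18 * s * T)))
        + ENNReal.ofReal (Real.exp (-1 / (18 * s * T))) := by
        gcongr
        · exact hexponent ▸ E.measure_exists_mul_deviation_ge_le hsum c (c / 6) T
        · have h := E.measure_exists_mul_deviation_ge_le hsum (-c) (c / 6) T
          rwa [neg_sq, hexponent] at h
    _ = ENNReal.ofReal (2 * Real.exp (-1 / (18 * s * T))) := by
        rw [← ENNReal.ofReal_add (by positivity) (by positivity), two_mul]

lemma measure_exists_le_floor_notMem_Icc_le [IsProbabilityMeasure μ]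
    (hsum : ∑ i ∈ range (lam + 1), γ i = 1) (n : ℕ) :
    μ {ω | ∃ k ≤ ⌊1 / (144 * (∑ i ∈ Icc 1 lam, γ i ^ 2) * Real.log n)⌋₊,
        E.p k ω ∉ Set.Icc (1 / 3 : ℝ) (2 / 3)}
      ≤ ENNReal.ofReal (2 / n ^ 2) := by
  set s := ∑ i ∈ Icc 1 lam, γ i ^ 2
  set T := ⌊1 / (144 * s * Real.log n)⌋₊
  rcases Nat.eq_zero_or_pos T with hT | hT
  · have hsub : {ω | ∃ k ≤ T, E.p k ω ∉ Set.Icc (1 / 3 : ℝ) (2 / 3)}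
        ⊆ {ω | E.p 0 ω ∉ Set.Icc (1 / 3 : ℝ) (2 / 3)} := by
      rintro ω ⟨k, hk, hout⟩
      obtain rfl : k = 0 := by omega
      exact hout
    exact (measure_mono_null hsub E.measure_p_zero_notMem_Icc).trans_le zero_le
  have hT₀ : 1 ≤ 1 / (144 * s * Real.log n) := Nat.one_le_floor_iff _ |>.1 hT
  have hpos : 0 < 144 * s * Real.log n := by
    contrapose! hT₀
    exact (one_div_nonpos.2 hT₀).trans_lt one_pos
  have hs : 0 < s := by linarith [pos_of_mul_pos_left hpos (Real.log_natCast_nonneg n)]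
  have hlog : 0 < Real.log n := pos_of_mul_pos_right hpos (by positivity)
  have hn : (0 : ℝ) < n := one_pos.trans ((Real.log_pos_iff n.cast_nonneg).1 hlog)
  refine (E.measure_exists_le_notMem_Icc_le hsum hs hT).trans (ENNReal.ofReal_le_ofReal ?_)
  have hTle : (T : ℝ) * (144 * s * Real.log n) ≤ 1 :=
    (le_div_iff₀ hpos).1 (Nat.floor_le (by positivity))
  calc 2 * Real.exp (-1 / (18 * s * T)) ≤ 2 * Real.exp (-(2 * Real.log n)) := by
        gcongr
        rw [neg_div, neg_le_neg_iff, le_div_iff₀ (by positivity)]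
        nlinarith [mul_pos (mul_pos hs hlog) (Nat.cast_pos.2 hT : (0 : ℝ) < T)]
    _ = 2 / n ^ 2 := by
        rw [Real.exp_neg, ← Real.log_rpow hn, Real.exp_log (by positivity)]
        norm_num
        ring

end NeutralBitEDA

theorem neutral_bit_no_genetic_drift_general {Ω : Type*} [MeasurableSpace Ω]
    (μ : Measure Ω) [IsProbabilityMeasure μ]
    (lam : ℕ) (γ : ℕ → ℝ)
    (hsum : ∑ i ∈ Finset.range (lam + 1), γ i = 1)
    (n : ℕ)
    (E : Fin n → NeutralBitEDA μ lam γ) :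
    1 - 2 / (n : ℝ≥0∞)
      ≤ μ {ω | ∀ i : Fin n, ∀ t : ℕ,
          (t : ℝ) ≤ 1 / (144 * (∑ i ∈ Finset.Icc 1 lam, γ i ^ 2) * Real.log n) →
          (E i).p t ω ∈ Set.Icc (1 / 3 : ℝ) (2 / 3)} := by
  set T₀ := 1 / (144 * (∑ i ∈ Finset.Icc 1 lam, γ i ^ 2) * Real.log n)
  set G := {ω | ∀ i : Fin n, ∀ t : ℕ, (t : ℝ) ≤ T₀ → (E i).p t ω ∈ Set.Icc (1 / 3 : ℝ) (2 / 3)}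
  set B : Fin n → Set Ω :=
    fun i => {ω | ∃ k ≤ ⌊T₀⌋₊, (E i).p k ω ∉ Set.Icc (1 / 3 : ℝ) (2 / 3)}
  have hcover : Gᶜ ⊆ ⋃ i, B i := by
    intro ω hω
    simp only [G, Set.mem_compl_iff, Set.mem_ofPred_eq, not_forall] at hω
    obtain ⟨i, t, ht, hout⟩ := hω
    exact Set.mem_iUnion.2 ⟨i, t, Nat.le_floor ht, hout⟩
  have hunion : μ (⋃ i, B i) ≤ 2 / n :=
    calc μ (⋃ i, B i) ≤ ∑ i, μ (B i) := measure_iUnion_fintype_le μ B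
      _ ≤ ∑ _ : Fin n, ENNReal.ofReal (2 / n ^ 2) :=
          sum_le_sum fun i _ => (E i).measure_exists_le_floor_notMem_Icc_le hsum n
      _ = ENNReal.ofReal (n * (2 / n ^ 2)) := by
          rw [sum_const, card_univ, Fintype.card_fin, nsmul_eq_mul,
            ENNReal.ofReal_mul (by positivity), ENNReal.ofReal_natCast]
      _ = ENNReal.ofReal (2 / n) := by
          rcases n.eq_zero_or_pos with rfl | hn
          · simp
          · field_simp
      _ ≤ 2 / n := by simpa using ENNReal.ofReal_div_le (x := 2) (Nat.cast_nonneg n)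
  calc 1 - 2 / (n : ℝ≥0∞) ≤ 1 - μ (⋃ i, B i) := tsub_le_tsub_left hunion 1
    _ ≤ μ G := by
        rw [tsub_le_iff_right, ← measure_univ (μ := μ)]
        exact (measure_univ_le_add_compl G).trans (add_le_add_right (measure_mono hcover) _)

/-- Let `n ≥ 2` and let `(E i).p` for `i ∈ Fin n` be `n` mutually independent
copies of the neutral-bit frequency process.  With
`T₀ = 1 / (144 * s * log n)` where `s = ∑_{i=1}^lam γ i ^ 2`, with probability
at least `1 - 2/n` all `n` frequencies stay in `[1/3, 2/3]` during the first
`T₀` iterations. -/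
theorem neutral_bit_no_genetic_drift {Ω : Type*} [MeasurableSpace Ω]
    (μ : Measure Ω) [IsProbabilityMeasure μ]
    (lam : ℕ) (hlam : 1 ≤ lam) (γ : ℕ → ℝ)
    (hsum : ∑ i ∈ Finset.range (lam + 1), γ i = 1)
    (hnz : ∃ i ∈ Finset.Icc 1 lam, γ i ≠ 0)
    (n : ℕ) (hn : 2 ≤ n)
    (E : Fin n → NeutralBitEDA μ lam γ)
    (hindep : iIndepFun (m := fun _ : Fin n => (inferInstance : MeasurableSpace (ℕ → ℝ)))
      (fun (i : Fin n) (ω : Ω) (t : ℕ) => (E i).p t ω) μ) :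
    1 - 2 / (n : ℝ≥0∞)
      ≤ μ {ω | ∀ i : Fin n, ∀ t : ℕ,
          (t : ℝ) ≤ 1 / (144 * (∑ i ∈ Finset.Icc 1 lam, γ i ^ 2) * Real.log n) →
          (E i).p t ω ∈ Set.Icc (1 / 3 : ℝ) (2 / 3)} :=
  neutral_bit_no_genetic_drift_general μ lam γ hsum n E
end
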